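/- arXiv:2510.18114 — 2 statements merged into one kernel-verified Lean document; each statement's English description precedes it below -/
import Mathlib

section
/- (Factorization lower bound, Proposition 1) Let q be the path measure of the forward masked diffusion on X^S started from q₀ and run until the all-mask state, and let p^θ be any reverse Markov model whose transitions factorize across positions, p^θ_{t−1|t}(x_{t−1}|x_t) = ∏_{i=1}^S p^{θ,i}_{t−1|t}(x^i_{t−1}|x_t), initialized at the all-mask state. Then the negative ELBO satisfies L(θ) ≥ Σ_{t=1}^T E[ KL( q_{t−1|t}(· | X_t) ‖ ∏_{i=1}^S q^i_{t−1|t}(· | X_t) ) ] + H(q₀), where q^i_{t−1|t} is the i-th marginal of the true reverse transition and H is Shannon entropy. -/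
open Finset

lemma gibbs_aux {n : Type*} [Fintype n] (m p : n → ℝ) (M : ℝ)
    (hm : ∀ v, 0 ≤ m v) (hp : ∀ v, 0 < p v)
    (hM : ∑ v, m v = M) (hp1 : ∑ v, p v = 1) :
    0 ≤ ∑ v, m v * Real.log (m v / (M * p v)) := by
  have hM0 : 0 ≤ M := hM ▸ Finset.sum_nonneg fun v _ => hm v
  have key : ∀ v, m v * Real.log (M * p v / m v) ≤ M * p v - m v := by
    intro v
    rcases eq_or_lt_of_le (hm v) with h | h
    · simp [← h]
      exact mul_nonneg hM0 (hp v).le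
    · have hMv : m v ≤ M := by
        rw [← hM]
        exact Finset.single_le_sum (fun w _ => hm w) (Finset.mem_univ v)
      have hMpos : 0 < M := lt_of_lt_of_le h hMv
      have hpos : 0 < M * p v / m v := div_pos (mul_pos hMpos (hp v)) h
      calc m v * Real.log (M * p v / m v)
          ≤ m v * (M * p v / m v - 1) :=
            mul_le_mul_of_nonneg_left (Real.log_le_sub_one_of_pos hpos) h.le
        _ = M * p v - m v := by field_simp
  have hle : ∑ v, m v * Real.log (M * p v / m v) ≤ ∑ v, (M * p v - m v) :=
    Finset.sum_le_sum fun v _ => key v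
  have hz : ∑ v, (M * p v - m v) = 0 := by
    rw [Finset.sum_sub_distrib, ← Finset.mul_sum, hp1, hM]; ring
  have heq : ∀ v, m v * Real.log (m v / (M * p v)) = -(m v * Real.log (M * p v / m v)) := by
    intro v
    rw [show m v / (M * p v) = (M * p v / m v)⁻¹ by rw [inv_div], Real.log_inv]
    ring
  calc (0:ℝ) = -∑ v, (M * p v - m v) := by rw [hz]; ring
    _ ≤ -∑ v, m v * Real.log (M * p v / m v) := by linarith
    _ = ∑ v, m v * Real.log (m v / (M * p v)) := by
        rw [← Finset.sum_neg_distrib]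
        exact Finset.sum_congr rfl fun v _ => (heq v).symm

lemma per_tb {n : Type*} [Fintype n] [DecidableEq n] {S : ℕ}
    (J : (Fin S → n) → ℝ) (M : ℝ) (p : Fin S → n → ℝ)
    (hJ : ∀ a, 0 ≤ J a) (hM : ∑ a, J a = M)
    (hp0 : ∀ i v, 0 < p i v) (hp1 : ∀ i, ∑ v, p i v = 1) :
    ∑ a, J a * Real.log ((J a / M) / ∏ i, ((∑ a', if a' i = a i then J a' else 0) / M))
      ≤ ∑ a, J a * Real.log ((J a / M) / ∏ i, p i (a i)) := by
  set m : Fin S → n → ℝ := fun i v => ∑ a', if a' i = v then J a' else 0 with hmdef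
  have hmnn : ∀ i v, 0 ≤ m i v := fun i v =>
    Finset.sum_nonneg fun a' _ => by by_cases h : a' i = v <;> simp [h, hJ a']
  have hmsum : ∀ i, ∑ v, m i v = M := by
    intro i
    rw [← hM, hmdef, Finset.sum_comm]
    refine Finset.sum_congr rfl fun a' _ => ?_
    simp
  have hmem : ∀ a i, J a ≤ m i (a i) := by
    intro a i
    have := Finset.single_le_sum (f := fun a' => if a' i = a i then J a' else 0)
      (fun a' _ => by by_cases h : a' i = a i <;> simp [h, hJ a']) (Finset.mem_univ a)
    simpa using this
  have term : ∀ a, J a * Real.log ((J a / M) / ∏ i, p i (a i))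
      - J a * Real.log ((J a / M) / ∏ i, (m i (a i) / M))
      = ∑ i, J a * Real.log (m i (a i) / (M * p i (a i))) := by
    intro a
    rcases eq_or_lt_of_le (hJ a) with h | h
    · simp [← h]
    · have hMpos : 0 < M :=
        lt_of_lt_of_le h (hM ▸ Finset.single_le_sum (fun w _ => hJ w) (Finset.mem_univ a))
      have hmpos : ∀ i, 0 < m i (a i) := fun i => lt_of_lt_of_le h (hmem a i)
      have hr : (0:ℝ) < J a / M := div_pos h hMpos
      have e1 : Real.log ((J a / M) / ∏ i, p i (a i))
          = Real.log (J a / M) - ∑ i, Real.log (p i (a i)) := by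
        rw [Real.log_div hr.ne' (Finset.prod_pos fun i _ => hp0 i (a i)).ne',
          Real.log_prod fun i _ => (hp0 i (a i)).ne']
      have e2 : Real.log ((J a / M) / ∏ i, (m i (a i) / M))
          = Real.log (J a / M) - ∑ i, Real.log (m i (a i) / M) := by
        rw [Real.log_div hr.ne' (Finset.prod_pos fun i _ => div_pos (hmpos i) hMpos).ne',
          Real.log_prod fun i _ => (div_pos (hmpos i) hMpos).ne']
      have e3 : ∀ i, Real.log (m i (a i) / (M * p i (a i)))
          = Real.log (m i (a i) / M) - Real.log (p i (a i)) := by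
        intro i
        rw [← div_div, Real.log_div (div_pos (hmpos i) hMpos).ne' (hp0 i (a i)).ne']
      rw [e1, e2]
      simp_rw [e3]
      rw [show ∑ i, J a * (Real.log (m i (a i) / M) - Real.log (p i (a i)))
          = J a * (∑ i, Real.log (m i (a i) / M) - ∑ i, Real.log (p i (a i))) by
        rw [mul_sub, Finset.mul_sum, Finset.mul_sum, ← Finset.sum_sub_distrib]
        exact Finset.sum_congr rfl fun i _ => by ring]
      ring
  have regroup : ∀ i : Fin S,
      ∑ a, J a * Real.log (m i (a i) / (M * p i (a i)))
        = ∑ v, m i v * Real.log (m i v / (M * p i v)) := by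
    intro i
    have step : ∀ v, m i v * Real.log (m i v / (M * p i v))
        = ∑ a, (if a i = v then J a * Real.log (m i v / (M * p i v)) else 0) := by
      intro v
      rw [hmdef]
      simp only
      rw [Finset.sum_mul]
      exact Finset.sum_congr rfl fun a _ => by
        by_cases h : a i = v <;> simp [h]
    symm
    simp_rw [step]
    rw [Finset.sum_comm]
    refine Finset.sum_congr rfl fun a _ => ?_
    rw [Finset.sum_ite_eq]
    simp
  have diff : ∑ a, J a * Real.log ((J a / M) / ∏ i, p i (a i))
      - ∑ a, J a * Real.log ((J a / M) / ∏ i, (m i (a i) / M))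
      = ∑ i, ∑ v, m i v * Real.log (m i v / (M * p i v)) := by
    rw [← Finset.sum_sub_distrib]
    simp_rw [term]
    rw [Finset.sum_comm]
    exact Finset.sum_congr rfl fun i _ => regroup i
  have hnn : 0 ≤ ∑ i, ∑ v, m i v * Real.log (m i v / (M * p i v)) :=
    Finset.sum_nonneg fun i _ => gibbs_aux (m i) (p i) M (hmnn i) (hp0 i) (hmsum i) (hp1 i)
  linarith [diff, hnn]


/-- Single-token masked forward kernel: the mask is absorbing; a non-masked token is kept with
probability `γt` and replaced by the mask with probability `1 − γt`. -/
def tokStep {K : ℕ} (γt : ℝ) (msk a b : Fin K) : ℝ :=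
  if a = msk then (if b = msk then 1 else 0)
  else γt * (if b = a then 1 else 0) + (1 - γt) * (if b = msk then 1 else 0)

/-- Masked forward kernel on sequences: coordinates are noised independently. -/
def seqStep {K S : ℕ} (γt : ℝ) (msk : Fin K) (a b : Fin S → Fin K) : ℝ :=
  ∏ i, tokStep γt msk (a i) (b i)

/-- Forward path probability of the masked chain. -/
noncomputable def mQpath {K S T : ℕ} (γ : Fin T → ℝ) (msk : Fin K)
    (q0 : (Fin S → Fin K) → ℝ) (x : Fin (T + 1) → (Fin S → Fin K)) : ℝ :=
  q0 (x 0) * ∏ t : Fin T, seqStep (γ t) msk (x t.castSucc) (x t.succ)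

/-- Marginal law of `X_u` under the masked forward chain. -/
noncomputable def mMarg {K S T : ℕ} (γ : Fin T → ℝ) (msk : Fin K)
    (q0 : (Fin S → Fin K) → ℝ) (u : Fin (T + 1)) (b : Fin S → Fin K) : ℝ :=
  ∑ x : Fin (T + 1) → (Fin S → Fin K), if x u = b then mQpath γ msk q0 x else 0

/-- Joint law of `(X_t, X_{t+1})` under the masked forward chain. -/
noncomputable def mJoint {K S T : ℕ} (γ : Fin T → ℝ) (msk : Fin K)
    (q0 : (Fin S → Fin K) → ℝ) (t : Fin T) (a b : Fin S → Fin K) : ℝ :=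
  ∑ x : Fin (T + 1) → (Fin S → Fin K),
    if x t.castSucc = a ∧ x t.succ = b then mQpath γ msk q0 x else 0


lemma mJoint_nonneg {K S T : ℕ} (γ : Fin T → ℝ) (hγ : ∀ t, γ t ∈ Set.Icc (0 : ℝ) 1)
    (msk : Fin K) (q0 : (Fin S → Fin K) → ℝ) (hq00 : ∀ x, 0 ≤ q0 x)
    (t : Fin T) (a b : Fin S → Fin K) : 0 ≤ mJoint γ msk q0 t a b := by
  refine Finset.sum_nonneg fun x _ => ?_
  have hQ : 0 ≤ mQpath γ msk q0 x := by
    refine mul_nonneg (hq00 _) (Finset.prod_nonneg fun u _ => Finset.prod_nonneg fun i _ => ?_)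
    have h0 := (hγ u).1
    have h1 := (hγ u).2
    unfold tokStep
    split_ifs <;> nlinarith
  split_ifs <;> simp [hQ]

lemma mJoint_marg {K S T : ℕ} (γ : Fin T → ℝ) (msk : Fin K)
    (q0 : (Fin S → Fin K) → ℝ) (t : Fin T) (b : Fin S → Fin K) :
    ∑ a, mJoint γ msk q0 t a b = mMarg γ msk q0 t.succ b := by
  unfold mJoint mMarg
  rw [Finset.sum_comm]
  refine Finset.sum_congr rfl fun x _ => ?_
  simp only [ite_and]
  rw [Finset.sum_ite_eq]
  simp

/-- **Proposition 1: factorization lower bound.** For the masked forward diffusion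
on `X^S` started from `q₀` and reaching the all-mask state (`γ̄_T = 0`), and any reverse Markov
model whose transitions factorize across positions,
`p^θ_{t−1|t}(x_{t−1}|x_t) = ∏ᵢ p^{θ,i}(xⁱ_{t−1}|x_t)`, the negative ELBO
`L(θ) = H(q₀) + Σ_t E[KL(q_{t−1|t}(·|X_t) ‖ p^θ_{t−1|t}(·|X_t))]` satisfies
`L(θ) ≥ Σ_t E[KL(q_{t−1|t}(·|X_t) ‖ ∏ᵢ qⁱ_{t−1|t}(·|X_t))] + H(q₀)`. -/
theorem stmt_12 {K S T : ℕ}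
    (γ : Fin T → ℝ) (hγ : ∀ t, γ t ∈ Set.Icc (0 : ℝ) 1)
    (hmask : ∏ t, γ t = 0)
    (msk : Fin (K + 1)) (hmsk : msk = Fin.last K)
    (q0 : (Fin S → Fin (K + 1)) → ℝ)
    (hq00 : ∀ x, 0 ≤ q0 x) (hq01 : ∑ x, q0 x = 1)
    (pfac : Fin T → (Fin S → Fin (K + 1)) → Fin S → Fin (K + 1) → ℝ)
    (hpfac0 : ∀ t b i v, 0 < pfac t b i v)
    (hpfac1 : ∀ t b i, ∑ v, pfac t b i v = 1) :
    ((-∑ x, q0 x * Real.log (q0 x))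
      + ∑ t : Fin T, ∑ b, ∑ a, mJoint γ msk q0 t a b *
          Real.log ((mJoint γ msk q0 t a b / mMarg γ msk q0 t.succ b)
            / ∏ i, pfac t b i (a i)))
    ≥ (∑ t : Fin T, ∑ b, ∑ a, mJoint γ msk q0 t a b *
          Real.log ((mJoint γ msk q0 t a b / mMarg γ msk q0 t.succ b)
            / ∏ i, ((∑ a' : Fin S → Fin (K + 1),
                      if a' i = a i then mJoint γ msk q0 t a' b else 0)
                    / mMarg γ msk q0 t.succ b)))
      + (-∑ x, q0 x * Real.log (q0 x)) := by
  have key : (∑ t : Fin T, ∑ b, ∑ a, mJoint γ msk q0 t a b *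
          Real.log ((mJoint γ msk q0 t a b / mMarg γ msk q0 t.succ b)
            / ∏ i, ((∑ a' : Fin S → Fin (K + 1),
                      if a' i = a i then mJoint γ msk q0 t a' b else 0)
                    / mMarg γ msk q0 t.succ b)))
      ≤ ∑ t : Fin T, ∑ b, ∑ a, mJoint γ msk q0 t a b *
          Real.log ((mJoint γ msk q0 t a b / mMarg γ msk q0 t.succ b)
            / ∏ i, pfac t b i (a i)) := by
    refine Finset.sum_le_sum fun t _ => Finset.sum_le_sum fun b _ => ?_
    exact per_tb (fun a => mJoint γ msk q0 t a b) (mMarg γ msk q0 t.succ b)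
      (fun i v => pfac t b i v)
      (fun a => mJoint_nonneg γ hγ msk q0 hq00 t a b)
      (mJoint_marg γ msk q0 t b)
      (fun i v => hpfac0 t b i v) (fun i => hpfac1 t b i)
  linarith
end

section
/- For the DDIM family of bridge kernels with parameter η ∈ [0,1], defined by q^η_{s|t}(y_s | y_t, y₀) = N(μ̃^η_{s|t}(y_t, y₀), η² Σ̃²_{s|t} I) with μ̃^η_{s|t}(y_t, y₀) = ᾱ_s y₀ + √(σ̄_s² − η² Σ̃²_{s|t}) · ε(y_t, y₀), ε(y_t, y₀) = (y_t − ᾱ_t y₀)/σ̄_t, and Σ̃²_{s|t} = σ_{t|s}² σ̄_s²/σ̄_t²: if Y_t given Y₀ is N(ᾱ_t Y₀, σ̄_t² I) and Y_s is drawn from q^η_{s|t}(· | Y_t, Y₀), then Y_s given Y₀ is N(ᾱ_s Y₀, σ̄_s² I) for every η ∈ [0,1]; i.e., the DDIM kernels preserve the forward marginals. -/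
open MeasureTheory ProbabilityTheory
open Real
open scoped NNReal ENNReal

lemma gaussianPDFReal_conv (m1 m2 : ℝ) {v1 v2 : ℝ≥0} (h1 : v1 ≠ 0) (h2 : v2 ≠ 0) (z : ℝ) :
    ∫ x, gaussianPDFReal m1 v1 x * gaussianPDFReal m2 v2 (z - x)
      = gaussianPDFReal (m1 + m2) (v1 + v2) z := by
  have hv1 : (0:ℝ) < v1 := by positivity
  have hv2 : (0:ℝ) < v2 := by positivity
  have hv12 : (0:ℝ) < (v1:ℝ) + v2 := by positivity
  set a : ℝ := ((v1:ℝ) + v2) / (2 * v1 * v2) with ha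
  have hapos : 0 < a := by positivity
  set c : ℝ := m1 + v1 * (z - m1 - m2) / ((v1:ℝ) + v2) with hc
  set C : ℝ := (√(2 * π * v1))⁻¹ * (√(2 * π * v2))⁻¹
      * rexp (-(z - (m1 + m2)) ^ 2 / (2 * ((v1:ℝ) + v2))) with hC
  have step1 : ∀ x : ℝ, gaussianPDFReal m1 v1 x * gaussianPDFReal m2 v2 (z - x)
      = C * rexp (-a * (x - c) ^ 2) := by
    intro x
    have hexp : -(x - m1) ^ 2 / (2 * (v1:ℝ)) + -(z - x - m2) ^ 2 / (2 * (v2:ℝ))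
        = -(z - (m1 + m2)) ^ 2 / (2 * ((v1:ℝ) + v2)) + -a * (x - c) ^ 2 := by
      rw [ha, hc]; field_simp; ring
    calc gaussianPDFReal m1 v1 x * gaussianPDFReal m2 v2 (z - x)
        = (√(2 * π * v1))⁻¹ * (√(2 * π * v2))⁻¹
            * rexp (-(x - m1) ^ 2 / (2 * (v1:ℝ)) + -(z - x - m2) ^ 2 / (2 * (v2:ℝ))) := by
          rw [gaussianPDFReal, gaussianPDFReal, Real.exp_add]; ring
      _ = C * rexp (-a * (x - c) ^ 2) := by
          rw [hexp, Real.exp_add, hC]; ring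
  rw [funext step1, MeasureTheory.integral_const_mul]
  have step2 : ∫ x : ℝ, rexp (-a * (x - c) ^ 2) = √(π / a) := by
    rw [integral_sub_right_eq_self (fun x => rexp (-a * x ^ 2)) c]
    exact integral_gaussian a
  have key : (√(2 * π * v1))⁻¹ * (√(2 * π * v2))⁻¹ * √(π / a)
      = (√(2 * π * ((v1:ℝ) + v2)))⁻¹ := by
    rw [← Real.sqrt_inv, ← Real.sqrt_inv, ← Real.sqrt_inv,
      ← Real.sqrt_mul (by positivity), ← Real.sqrt_mul (by positivity)]
    congr 1
    rw [ha]; field_simp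
  rw [step2, hC, gaussianPDFReal]
  push_cast
  rw [← key]
  ring

lemma gaussianReal_conv (m1 m2 : ℝ) (v1 v2 : ℝ≥0) :
    ((gaussianReal m1 v1).prod (gaussianReal m2 v2)).map (fun p : ℝ × ℝ => p.1 + p.2)
      = gaussianReal (m1 + m2) (v1 + v2) := by
  by_cases h1 : v1 = 0
  · subst h1
    rw [gaussianReal_zero_var, Measure.dirac_prod,
      Measure.map_map measurable_add (measurable_prodMk_left)]
    have : ((fun p : ℝ × ℝ => p.1 + p.2) ∘ Prod.mk m1) = fun y => m1 + y := rfl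
    rw [this, gaussianReal_map_const_add, zero_add, add_comm m2 m1]
  by_cases h2 : v2 = 0
  · subst h2
    rw [gaussianReal_zero_var, Measure.prod_dirac,
      Measure.map_map measurable_add measurable_prodMk_right]
    have : ((fun p : ℝ × ℝ => p.1 + p.2) ∘ fun x => (x, m2)) = fun x => x + m2 := rfl
    rw [this, gaussianReal_map_add_const, add_zero]
  have h12 : v1 + v2 ≠ 0 := by simp [h1]
  ext s hs
  rw [Measure.map_apply measurable_add hs, gaussianReal_apply _ h12 s,
    Measure.prod_apply (measurable_add hs)]
  have key : ∀ x : ℝ, gaussianReal m2 v2 (Prod.mk x ⁻¹' ((fun p : ℝ × ℝ => p.1 + p.2) ⁻¹' s))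
      = ∫⁻ z in s, ENNReal.ofReal (gaussianPDFReal m2 v2 (z - x)) := by
    intro x
    have hpre : Prod.mk x ⁻¹' ((fun p : ℝ × ℝ => p.1 + p.2) ⁻¹' s) = (fun y => x + y) ⁻¹' s := rfl
    rw [hpre, ← Measure.map_apply (measurable_const_add x) hs, gaussianReal_map_const_add x,
      gaussianReal_apply _ h2]
    refine setLIntegral_congr_fun hs (fun z _ => ?_)
    rw [gaussianPDF, gaussianPDFReal_sub]
  simp_rw [key]
  rw [gaussianReal_of_var_ne_zero _ h1,
    lintegral_withDensity_eq_lintegral_mul _ (measurable_gaussianPDF _ _)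
      (by
        apply Measurable.lintegral_prod_right (f := fun x z => ENNReal.ofReal (gaussianPDFReal m2 v2 (z - x)))
        exact ((measurable_gaussianPDFReal m2 v2).comp
          (measurable_snd.sub measurable_fst)).ennreal_ofReal)]
  have hmul : Measurable (Function.uncurry fun x z =>
      gaussianPDF m1 v1 x * ENNReal.ofReal (gaussianPDFReal m2 v2 (z - x))) :=
    ((measurable_gaussianPDF m1 v1).comp measurable_fst).mul
      ((measurable_gaussianPDFReal m2 v2).comp (measurable_snd.sub measurable_fst)).ennreal_ofReal
  have hswap := lintegral_lintegral_swap (μ := (volume : Measure ℝ))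
      (ν := (volume : Measure ℝ).restrict s)
      (f := fun x z => gaussianPDF m1 v1 x * ENNReal.ofReal (gaussianPDFReal m2 v2 (z - x)))
      hmul.aemeasurable
  calc ∫⁻ x, gaussianPDF m1 v1 x * ∫⁻ z in s, ENNReal.ofReal (gaussianPDFReal m2 v2 (z - x))
      = ∫⁻ x, ∫⁻ z in s, gaussianPDF m1 v1 x * ENNReal.ofReal (gaussianPDFReal m2 v2 (z - x)) := by
        refine lintegral_congr fun x => ?_
        exact (lintegral_const_mul _ ((measurable_gaussianPDFReal m2 v2).comp
          (measurable_id.sub_const x)).ennreal_ofReal).symm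
    _ = ∫⁻ z in s, ∫⁻ x, gaussianPDF m1 v1 x * ENNReal.ofReal (gaussianPDFReal m2 v2 (z - x)) :=
        hswap
    _ = ∫⁻ z in s, gaussianPDF (m1 + m2) (v1 + v2) z := by
        refine setLIntegral_congr_fun hs (fun z _ => ?_)
        have hbd : ∀ x : ℝ, ‖gaussianPDFReal m2 v2 (z - x)‖ ≤ (√(2 * π * v2))⁻¹ := by
          intro x
          rw [Real.norm_eq_abs, abs_of_nonneg (gaussianPDFReal_nonneg _ _ _), gaussianPDFReal]
          refine mul_le_of_le_one_right (by positivity) ?_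
          calc rexp (-(z - x - m2) ^ 2 / (2 * (v2:ℝ)))
              ≤ rexp 0 := Real.exp_le_exp.mpr
                (div_nonpos_of_nonpos_of_nonneg (neg_nonpos.mpr (sq_nonneg _)) (by positivity))
            _ = 1 := Real.exp_zero
        have hint : Integrable (fun x => gaussianPDFReal m1 v1 x * gaussianPDFReal m2 v2 (z - x)) := by
          have := (integrable_gaussianPDFReal m1 v1).bdd_mul
            (((stronglyMeasurable_gaussianPDFReal m2 v2).comp_measurable
              ((measurable_const.sub measurable_id))).aestronglyMeasurable)
            (c := (√(2 * π * v2))⁻¹) (ae_of_all _ hbd)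
          simpa [mul_comm] using this
        simp_rw [gaussianPDF_def, ← ENNReal.ofReal_mul (gaussianPDFReal_nonneg m1 v1 _)]
        rw [← ofReal_integral_eq_lintegral_ofReal hint
          (ae_of_all _ fun x => mul_nonneg (gaussianPDFReal_nonneg _ _ _)
            (gaussianPDFReal_nonneg _ _ _)),
          gaussianPDFReal_conv m1 m2 h1 h2 z]

lemma gaussianReal_prod_affine (m1 m2 : ℝ) (v1 v2 : ℝ≥0) (c a b : ℝ) :
    ((gaussianReal m1 v1).prod (gaussianReal m2 v2)).map
        (fun p : ℝ × ℝ => c + a * p.1 + b * p.2)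
      = gaussianReal (c + a * m1 + b * m2)
          (⟨a ^ 2, sq_nonneg a⟩ * v1 + ⟨b ^ 2, sq_nonneg b⟩ * v2) := by
  have hmf : Measurable fun x : ℝ => c + a * x := (measurable_const_mul a).const_add c
  have hmg : Measurable fun y : ℝ => b * y := measurable_const_mul b
  have hcomp : (fun p : ℝ × ℝ => c + a * p.1 + b * p.2)
      = (fun q : ℝ × ℝ => q.1 + q.2) ∘ Prod.map (fun x => c + a * x) (fun y => b * y) := rfl
  rw [hcomp, ← Measure.map_map measurable_add (hmf.prodMap hmg),
    ← Measure.map_prod_map _ _ hmf hmg]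
  have hf : (gaussianReal m1 v1).map (fun x => c + a * x)
      = gaussianReal (c + a * m1) (⟨a ^ 2, sq_nonneg a⟩ * v1) := by
    have : (fun x : ℝ => c + a * x) = (fun x : ℝ => x + c) ∘ (fun x : ℝ => a * x) := by
      funext x; simp [add_comm]
    rw [this, ← Measure.map_map (measurable_add_const c) (measurable_const_mul a),
      gaussianReal_map_const_mul, gaussianReal_map_add_const, add_comm]
    rfl
  have hg : (gaussianReal m2 v2).map (fun y => b * y)
      = gaussianReal (b * m2) (⟨b ^ 2, sq_nonneg b⟩ * v2) := gaussianReal_map_const_mul b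
  rw [hf, hg, gaussianReal_conv]


/-- **DDIM kernels preserve the forward marginals.** With
`σ_{t|s}² = σ̄_t² − (ᾱ_t/ᾱ_s)² σ̄_s²`, `Σ̃²_{s|t} = σ_{t|s}² σ̄_s²/σ̄_t²`,
`ε(y_t, y₀) = (y_t − ᾱ_t y₀)/σ̄_t`, and
`μ̃^η_{s|t}(y_t, y₀) = ᾱ_s y₀ + √(σ̄_s² − η² Σ̃²_{s|t}) ε(y_t, y₀)`: if `Y_t` given `Y₀ = y₀` is
`N(ᾱ_t y₀, σ̄_t² I)` and `Y_s = μ̃^η_{s|t}(Y_t, y₀) + η Σ̃_{s|t} ξ` with `ξ ∼ N(0, I)` independent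
of `Y_t`, then `Y_s` given `Y₀ = y₀` is `N(ᾱ_s y₀, σ̄_s² I)`, for every `η ∈ [0, 1]`. -/
theorem stmt_18 {Ω : Type*} [MeasurableSpace Ω] (P : Measure Ω) [IsProbabilityMeasure P]
    (d : ℕ) (y0 : Fin d → ℝ) (η αbar_s αbar_t σbar_s σbar_t : ℝ)
    (hη0 : 0 ≤ η) (hη1 : η ≤ 1)
    (hαs : 0 < αbar_s) (hαt : 0 < αbar_t) (hσs : 0 < σbar_s) (hσt : 0 < σbar_t)
    (hσts : 0 ≤ σbar_t ^ 2 - (αbar_t / αbar_s) ^ 2 * σbar_s ^ 2)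
    (hSigma : η ^ 2 * ((σbar_t ^ 2 - (αbar_t / αbar_s) ^ 2 * σbar_s ^ 2) * σbar_s ^ 2 / σbar_t ^ 2)
            ≤ σbar_s ^ 2)
    (Yt ξ : Ω → Fin d → ℝ) (hYt : Measurable Yt) (hξ : Measurable ξ)
    (hYtlaw : P.map Yt
      = Measure.pi fun i => gaussianReal (αbar_t * y0 i) ((σbar_t ^ 2).toNNReal))
    (hξlaw : P.map ξ = Measure.pi fun _ => gaussianReal 0 1)
    (hindep : IndepFun Yt ξ P) :
    P.map (fun ω i =>
        αbar_s * y0 i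
        + Real.sqrt (σbar_s ^ 2
            - η ^ 2 * ((σbar_t ^ 2 - (αbar_t / αbar_s) ^ 2 * σbar_s ^ 2)
                * σbar_s ^ 2 / σbar_t ^ 2))
          * ((Yt ω i - αbar_t * y0 i) / σbar_t)
        + η * Real.sqrt ((σbar_t ^ 2 - (αbar_t / αbar_s) ^ 2 * σbar_s ^ 2)
              * σbar_s ^ 2 / σbar_t ^ 2) * ξ ω i)
      = Measure.pi fun i => gaussianReal (αbar_s * y0 i) ((σbar_s ^ 2).toNNReal) := by
  set S : ℝ := (σbar_t ^ 2 - (αbar_t / αbar_s) ^ 2 * σbar_s ^ 2) * σbar_s ^ 2 / σbar_t ^ 2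
    with hSdef
  set A : ℝ := Real.sqrt (σbar_s ^ 2 - η ^ 2 * S) with hAdef
  set B : ℝ := η * Real.sqrt S with hBdef
  have hσt0 : σbar_t ≠ 0 := hσt.ne'
  have hS0 : 0 ≤ S := by
    rw [hSdef]
    exact div_nonneg (mul_nonneg hσts (sq_nonneg _)) (sq_nonneg _)
  have hA2 : A ^ 2 = σbar_s ^ 2 - η ^ 2 * S := Real.sq_sqrt (by linarith)
  have hB2 : B ^ 2 = η ^ 2 * S := by
    rw [hBdef, mul_pow, Real.sq_sqrt hS0]
  -- the per-coordinate affine map and its law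
  have hcomp : ∀ i : Fin d, MeasurePreserving
      (fun p : ℝ × ℝ => αbar_s * y0 i + A * ((p.1 - αbar_t * y0 i) / σbar_t) + B * p.2)
      ((gaussianReal (αbar_t * y0 i) ((σbar_t ^ 2).toNNReal)).prod (gaussianReal 0 1))
      (gaussianReal (αbar_s * y0 i) ((σbar_s ^ 2).toNNReal)) := by
    intro i
    refine ⟨by fun_prop, ?_⟩
    have hfun : (fun p : ℝ × ℝ => αbar_s * y0 i + A * ((p.1 - αbar_t * y0 i) / σbar_t) + B * p.2)
        = fun p : ℝ × ℝ =>
            (αbar_s * y0 i - A / σbar_t * (αbar_t * y0 i)) + A / σbar_t * p.1 + B * p.2 := by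
      funext p
      field_simp
      ring
    rw [hfun, gaussianReal_prod_affine]
    congr 1
    · ring
    · apply NNReal.coe_injective
      push_cast
      show (A / σbar_t) ^ 2 * ((σbar_t ^ 2).toNNReal : ℝ) + B ^ 2 * 1 = ((σbar_s ^ 2).toNNReal : ℝ)
      rw [Real.coe_toNNReal _ (sq_nonneg σbar_t), Real.coe_toNNReal _ (sq_nonneg σbar_s),
        div_pow, hA2, hB2]
      field_simp
      ring
  -- joint law of the pair
  have hpair : P.map (fun ω => (Yt ω, ξ ω))
      = (Measure.pi fun i => gaussianReal (αbar_t * y0 i) ((σbar_t ^ 2).toNNReal)).prod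
        (Measure.pi fun _ : Fin d => gaussianReal 0 1) := by
    rw [← hYtlaw, ← hξlaw]
    exact (indepFun_iff_map_prod_eq_prod_map_map hYt.aemeasurable hξ.aemeasurable).mp hindep
  have hFmeas : Measurable (fun p : (Fin d → ℝ) × (Fin d → ℝ) => fun i =>
      αbar_s * y0 i + A * ((p.1 i - αbar_t * y0 i) / σbar_t) + B * p.2 i) := by fun_prop
  have hstep : P.map (fun ω i =>
      αbar_s * y0 i + A * ((Yt ω i - αbar_t * y0 i) / σbar_t) + B * ξ ω i)
      = ((P.map (fun ω => (Yt ω, ξ ω))).map (fun p : (Fin d → ℝ) × (Fin d → ℝ) => fun i =>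
          αbar_s * y0 i + A * ((p.1 i - αbar_t * y0 i) / σbar_t) + B * p.2 i)) := by
    rw [Measure.map_map hFmeas (hYt.prodMk hξ)]
    rfl
  have he := measurePreserving_arrowProdEquivProdArrow ℝ ℝ (Fin d)
    (fun i => gaussianReal (αbar_t * y0 i) ((σbar_t ^ 2).toNNReal))
    (fun _ => gaussianReal 0 1)
  calc P.map (fun ω i =>
        αbar_s * y0 i + A * ((Yt ω i - αbar_t * y0 i) / σbar_t) + B * ξ ω i)
      = ((Measure.pi fun i : Fin d =>
            (gaussianReal (αbar_t * y0 i) ((σbar_t ^ 2).toNNReal)).prod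
              (gaussianReal 0 1)).map
          (MeasurableEquiv.arrowProdEquivProdArrow ℝ ℝ (Fin d))).map
          (fun p : (Fin d → ℝ) × (Fin d → ℝ) => fun i =>
            αbar_s * y0 i + A * ((p.1 i - αbar_t * y0 i) / σbar_t) + B * p.2 i) := by
        rw [hstep, hpair, he.map_eq]
    _ = Measure.pi fun i => gaussianReal (αbar_s * y0 i) ((σbar_s ^ 2).toNNReal) := by
        rw [Measure.map_map hFmeas (MeasurableEquiv.arrowProdEquivProdArrow ℝ ℝ (Fin d)).measurable]
        exact (measurePreserving_pi _ _ hcomp).map_eq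
end
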